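/- arXiv:2105.09056 — 2 statements merged into one kernel-verified Lean document; each statement's English description precedes it below -/
import Mathlib

section
/- Let D and D' be Hermitian Dirac operators with zero diagonal on n vertices which agree on all entries except that D'_{xy} = D'_{yx} = 0 while |D_{xy}| = 1/w with w > 0 (D' is obtained from D by deleting the single edge {x,y} of weight w). Assume the graph G_{D'} is connected. Then |1/d^D(x,y) − 1/d^{D'}(x,y)| ≤ 1/w. -/
open scoped ENNReal

/-- The operator norm on square matrices induced by the Euclidean (ℓ²) norm. -/
noncomputable def opNorm {ι : Type*} [Finite ι] (M : Matrix ι ι ℂ) : ℝ :=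
  letI := Fintype.ofFinite ι
  letI := Classical.decEq ι
  ‖Matrix.toEuclideanCLM (𝕜 := ℂ) M‖

/-- The commutator `[D, π(a)]` of a matrix with the diagonal matrix of `a`. -/
noncomputable def commD {ι : Type*} [Finite ι] (D : Matrix ι ι ℂ) (a : ι → ℂ) : Matrix ι ι ℂ :=
  letI := Fintype.ofFinite ι
  letI := Classical.decEq ι
  D * Matrix.diagonal a - Matrix.diagonal a * D

/-- Connes' noncommutative distance associated to the Dirac operator `D`. -/
noncomputable def ncDist {ι : Type*} [Finite ι] (D : Matrix ι ι ℂ) (i j : ι) : ℝ≥0∞ :=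
  ⨆ (a : ι → ℂ) (_ : opNorm (commD D a) ≤ 1), ENNReal.ofReal ‖a i - a j‖

/-- The weight of an edge: the inverse of `|D i j|` (infinite if `D i j = 0`). -/
noncomputable def eWeight {ι : Type*} (D : Matrix ι ι ℂ) (u v : ι) : ℝ≥0∞ :=
  (ENNReal.ofReal ‖D u v‖)⁻¹

/-- Adjacency in the graph `G_D`. -/
def Adjac {ι : Type*} (D : Matrix ι ι ℂ) (u v : ι) : Prop := u ≠ v ∧ D u v ≠ 0

/-- The length of a walk `i :: p` computed with weights `eWeight D`. -/
noncomputable def walkLength {ι : Type*} (D : Matrix ι ι ℂ) : ι → List ι → ℝ≥0∞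
  | _, [] => 0
  | u, v :: rest => eWeight D u v + walkLength D v rest

/-- `i :: p` is a walk from `i` to `j` in the graph `G_D`. -/
def IsWalk {ι : Type*} (D : Matrix ι ι ℂ) (i j : ι) (p : List ι) : Prop :=
  List.Chain (Adjac D) i p ∧ (i :: p).getLast (List.cons_ne_nil _ _) = j

/-- `i` and `j` lie in the same connected component of `G_D`. -/
def Conn {ι : Type*} (D : Matrix ι ι ℂ) (i j : ι) : Prop := ∃ p, IsWalk D i j p

/-- The geodesic (weighted shortest-path) distance on `G_D`. -/
noncomputable def gDist {ι : Type*} (D : Matrix ι ι ℂ) (i j : ι) : ℝ≥0∞ :=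
  ⨅ (p : List ι) (_ : IsWalk D i j p), walkLength D i p

/-!
Deleting the edge `{x, y}` changes `D` by a matrix `E` supported on the entries `(x, y)` and
`(y, x)`, both of modulus `1 / w`. Then `[E, π(a)]` is a weighted transposition of coordinates,
so `‖[E, π(a)]‖ ≤ |a x - a y| / w`, and the commutator norms for `D` and `D'` differ by at most
this. Rescaling a competitor `a` for one distance by `1 / (1 + |a x - a y| / w)` turns it into a
competitor for the other, which moves `1 / |a x - a y|` by exactly `1 / w`.
-/

section

variable {ι : Type*} [Fintype ι] [DecidableEq ι]

lemma opNorm_eq (M : Matrix ι ι ℂ) : opNorm M = ‖Matrix.toEuclideanCLM (𝕜 := ℂ) M‖ := by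
  unfold opNorm
  congr!

lemma commD_eq (D : Matrix ι ι ℂ) (a : ι → ℂ) :
    commD D a = D * Matrix.diagonal a - Matrix.diagonal a * D := by
  unfold commD
  congr!

lemma opNorm_add_le (M N : Matrix ι ι ℂ) : opNorm (M + N) ≤ opNorm M + opNorm N := by
  simp only [opNorm_eq, map_add]
  exact norm_add_le _ _

lemma opNorm_smul (c : ℂ) (M : Matrix ι ι ℂ) : opNorm (c • M) = ‖c‖ * opNorm M := by
  simp only [opNorm_eq, map_smul]
  exact norm_smul c _

/-- `M` acts on `ℓ²` by `v ↦ (M i (σ i) * v (σ i))ᵢ`, a weighted permutation of coordinates. -/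
lemma opNorm_le_of_eq_zero_of_ne_perm (M : Matrix ι ι ℂ) (σ : Equiv.Perm ι)
    (hM : ∀ i j, j ≠ σ i → M i j = 0) {c : ℝ} (hc : 0 ≤ c) (hbound : ∀ i, ‖M i (σ i)‖ ≤ c) :
    opNorm M ≤ c := by
  rw [opNorm_eq]
  refine ContinuousLinearMap.opNorm_le_bound _ hc fun v ↦ ?_
  have hMv : ∀ i, Matrix.toEuclideanCLM (𝕜 := ℂ) M v i = M i (σ i) * v (σ i) := fun i ↦
    Finset.sum_eq_single_of_mem (σ i) (Finset.mem_univ _) fun j _ hj ↦ by simp [hM i j hj]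
  refine (sq_le_sq₀ (norm_nonneg _) (by positivity)).mp ?_
  calc ‖Matrix.toEuclideanCLM (𝕜 := ℂ) M v‖ ^ 2
      = ∑ i, ‖M i (σ i)‖ ^ 2 * ‖v (σ i)‖ ^ 2 := by
        simp only [EuclideanSpace.norm_sq_eq, hMv, norm_mul, mul_pow]
    _ ≤ ∑ i, c ^ 2 * ‖v (σ i)‖ ^ 2 := by gcongr with i; exact hbound i
    _ = (c * ‖v‖) ^ 2 := by
        rw [← Finset.mul_sum, Equiv.sum_comp σ (fun i ↦ ‖v i‖ ^ 2), ← EuclideanSpace.norm_sq_eq,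
          mul_pow]

lemma commD_apply (D : Matrix ι ι ℂ) (a : ι → ℂ) (i j : ι) :
    commD D a i j = D i j * (a j - a i) := by
  rw [commD_eq]
  simp only [Matrix.sub_apply, Matrix.mul_diagonal, Matrix.diagonal_mul]
  ring

lemma commD_smul (D : Matrix ι ι ℂ) (c : ℂ) (a : ι → ℂ) : commD D (c • a) = c • commD D a := by
  ext i j
  simp only [commD_apply, Matrix.smul_apply, Pi.smul_apply, smul_eq_mul]
  ring

lemma commD_add_left (D E : Matrix ι ι ℂ) (a : ι → ℂ) :
    commD (D + E) a = commD D a + commD E a := by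
  ext i j
  simp only [commD_apply, Matrix.add_apply]
  ring

lemma ofReal_norm_sub_div_le_ncDist (D : Matrix ι ι ℂ) (a : ι → ℂ) (i j : ι) {t : ℝ} (ht : 0 < t)
    (ha : opNorm (commD D a) ≤ t) : ENNReal.ofReal (‖a i - a j‖ / t) ≤ ncDist D i j := by
  set b : ι → ℂ := ((t : ℂ))⁻¹ • a
  have hnorm : ‖((t : ℂ))⁻¹‖ = t⁻¹ := by
    rw [norm_inv, Complex.norm_real, Real.norm_of_nonneg ht.le]
  have hb : opNorm (commD D b) ≤ 1 := by
    rw [commD_smul, opNorm_smul, hnorm]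
    exact inv_mul_le_one_of_le₀ ha ht.le
  have hbij : ‖b i - b j‖ = ‖a i - a j‖ / t := by
    simp only [b, Pi.smul_apply, smul_eq_mul, ← mul_sub, norm_mul, hnorm, div_eq_inv_mul]
  rw [← hbij]
  exact le_iSup₂_of_le (f := fun a (_ : opNorm (commD D a) ≤ 1) ↦ ENNReal.ofReal ‖a i - a j‖)
    b hb le_rfl

/-- Rescale each competitor `a` for `d^D(x, y)` by `1 / (1 + c |a x - a y|)` to obtain one for
`d^{D'}(x, y)`. -/
lemma inv_ncDist_le_add (D D' : Matrix ι ι ℂ) (x y : ι) {c : ℝ} (hc : 0 ≤ c)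
    (hD : ∀ a, opNorm (commD D' a) ≤ opNorm (commD D a) + c * ‖a x - a y‖) :
    (ncDist D' x y)⁻¹ ≤ (ncDist D x y)⁻¹ + ENNReal.ofReal c := by
  conv_rhs => rw [ncDist]; simp only [ENNReal.inv_iSup, ENNReal.iInf_add]
  refine le_iInf₂ fun a ha ↦ ?_
  rcases (norm_nonneg (a x - a y)).eq_or_lt with hs | hs
  · simp [← hs]
  set s := ‖a x - a y‖
  have ht : 0 < 1 + c * s := by positivity
  have hle := ofReal_norm_sub_div_le_ncDist D' a x y ht ((hD a).trans (by gcongr))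
  calc (ncDist D' x y)⁻¹ ≤ (ENNReal.ofReal (s / (1 + c * s)))⁻¹ := ENNReal.inv_le_inv' hle
    _ = ENNReal.ofReal (s⁻¹ + c) := by
        rw [← ENNReal.ofReal_inv_of_pos (by positivity)]
        congr 1
        field_simp
    _ = (ENNReal.ofReal s)⁻¹ + ENNReal.ofReal c := by
        rw [ENNReal.ofReal_add (by positivity) hc, ENNReal.ofReal_inv_of_pos hs]

/-- The commutator is supported on `(x, y)` and `(y, x)`, i.e. along the transposition `swap x y`,
with entries `E x y (a y - a x)` and `E y x (a x - a y)`. -/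
lemma opNorm_commD_le_of_eq_zero_off_pair (E : Matrix ι ι ℂ) (x y : ι)
    (hE : ∀ i j, ¬((i, j) = (x, y) ∨ (i, j) = (y, x)) → E i j = 0) {c : ℝ} (hc : 0 ≤ c)
    (hxy : ‖E x y‖ ≤ c) (hyx : ‖E y x‖ ≤ c) (a : ι → ℂ) :
    opNorm (commD E a) ≤ c * ‖a x - a y‖ := by
  refine opNorm_le_of_eq_zero_of_ne_perm _ (Equiv.swap x y) (fun i j hj ↦ ?_) (by positivity)
    fun i ↦ ?_
  · rw [commD_apply, hE i j, zero_mul]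
    rintro (h | h) <;> obtain ⟨rfl, rfl⟩ := Prod.mk.injEq .. ▸ h <;> simp at hj
  · rw [commD_apply, norm_mul]
    by_cases hix : i = x
    · subst hix
      simpa [norm_sub_rev (a y)] using mul_le_mul_of_nonneg_right hxy (norm_nonneg (a i - a y))
    by_cases hiy : i = y
    · subst hiy
      simpa using mul_le_mul_of_nonneg_right hyx (norm_nonneg (a x - a i))
    simp only [Equiv.swap_apply_of_ne_of_ne hix hiy, sub_self, norm_zero, mul_zero]
    positivity

lemma inv_ncDist_le_of_eq_off_pair (D D' : Matrix ι ι ℂ) (x y : ι)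
    (hDD' : ∀ i j, ¬((i, j) = (x, y) ∨ (i, j) = (y, x)) → D' i j = D i j) {c : ℝ} (hc : 0 ≤ c)
    (hxy : ‖D' x y - D x y‖ ≤ c) (hyx : ‖D' y x - D y x‖ ≤ c) :
    (ncDist D' x y)⁻¹ ≤ (ncDist D x y)⁻¹ + ENNReal.ofReal c := by
  refine inv_ncDist_le_add D D' x y hc fun a ↦ ?_
  have hsplit : commD D' a = commD D a + commD (D' - D) a := by
    rw [← commD_add_left, add_sub_cancel]
  have hsupp : ∀ i j, ¬((i, j) = (x, y) ∨ (i, j) = (y, x)) → (D' - D) i j = 0 := fun i j h ↦ by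
    rw [Matrix.sub_apply, hDD' i j h, sub_self]
  rw [hsplit]
  exact (opNorm_add_le _ _).trans <| add_le_add_right
    (opNorm_commD_le_of_eq_zero_off_pair _ x y hsupp hc hxy hyx a) _

end

theorem stmt14_general {n : ℕ} (D D' : Matrix (Fin n) (Fin n) ℂ)
    (hherm : D.IsHermitian)
    (x y : Fin n) (w : ℝ) (hw : 0 < w)
    (habs : ‖D x y‖ = w⁻¹)
    (hzero : D' x y = 0 ∧ D' y x = 0)
    (hagree : ∀ a b : Fin n, ¬ ((a, b) = (x, y) ∨ (a, b) = (y, x)) → D' a b = D a b) :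
    (ncDist D x y)⁻¹ ≤ (ncDist D' x y)⁻¹ + ENNReal.ofReal w⁻¹ ∧
    (ncDist D' x y)⁻¹ ≤ (ncDist D x y)⁻¹ + ENNReal.ofReal w⁻¹ := by
  have habs' : ‖D y x‖ = w⁻¹ := by rw [← habs, ← hherm.apply x y, norm_star]
  have hw' : 0 ≤ w⁻¹ := inv_nonneg.mpr hw.le
  constructor
  · refine inv_ncDist_le_of_eq_off_pair D' D x y (fun i j h ↦ (hagree i j h).symm) hw' ?_ ?_
    · rw [hzero.1, sub_zero, habs]
    · rw [hzero.2, sub_zero, habs']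
  · refine inv_ncDist_le_of_eq_off_pair D D' x y hagree hw' ?_ ?_
    · rw [hzero.1, zero_sub, norm_neg, habs]
    · rw [hzero.2, zero_sub, norm_neg, habs']

theorem stmt14 {n : ℕ} (D D' : Matrix (Fin n) (Fin n) ℂ)
    (hherm : D.IsHermitian) (hdiag : ∀ i, D i i = 0)
    (hherm' : D'.IsHermitian) (hdiag' : ∀ i, D' i i = 0)
    (x y : Fin n) (hxy : x ≠ y) (w : ℝ) (hw : 0 < w)
    (habs : ‖D x y‖ = w⁻¹)
    (hzero : D' x y = 0 ∧ D' y x = 0)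
    (hagree : ∀ a b : Fin n, ¬ ((a, b) = (x, y) ∨ (a, b) = (y, x)) → D' a b = D a b)
    (hconn' : ∀ u v, Conn D' u v) :
    (ncDist D x y)⁻¹ ≤ (ncDist D' x y)⁻¹ + ENNReal.ofReal w⁻¹ ∧
    (ncDist D' x y)⁻¹ ≤ (ncDist D x y)⁻¹ + ENNReal.ofReal w⁻¹ :=
  stmt14_general D D' hherm x y w hw habs hzero hagree
end

section
/- Let n ≥ 3, let b₁,…,b_{n−1} ∈ ℂ, and let B ∈ M_n(ℂ) be the matrix with B_{i,i+1} = b_i, B_{i+1,i} = −conj(b_i) for i = 1,…,n−1 and all other entries 0. Then the operator norm of B (with respect to the Euclidean norm on ℂ^n) satisfies: (i) max_{1≤i≤n−2} sqrt(|b_i|² + |b_{i+1}|²) ≤ ‖B‖; (ii) (2/n)·Σ_{i=1}^{n−1} |b_i| ≤ ‖B‖; (iii) ‖B‖ ≤ max_{1≤i≤n−2} (|b_i| + |b_{i+1}|); (iv) ‖B‖ ≤ 2·cos(π/(n+1))·max_{1≤i≤n−1} |b_i|. -/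
/-!
`B` is skew-Hermitian, so `‖B‖` is its numerical radius `sup ‖⟪x, B x⟫‖ / ‖x‖²`, and
`⟪x, B x⟫ = z - conj z` with `z = ∑ bₘ conj xₘ xₘ₊₁`. The lower bound (i) is the norm of a
column of `B`, and (ii) evaluates the quadratic form at a unimodular vector whose phases make
every term of `z` equal to `I * ‖bₘ‖`. The upper bounds come from a Schur test: for positive
weights `w` with `‖bₘ₋₁‖ wₘ₋₁ + ‖bₘ‖ wₘ₊₁ ≤ C wₘ`, the weighted AM–GM inequality
`2 ‖bₘ‖ sₘ sₘ₊₁ ≤ ‖bₘ‖ (wₘ₊₁ / wₘ) sₘ² + ‖bₘ‖ (wₘ / wₘ₊₁) sₘ₊₁²` (where `sₘ = ‖xₘ‖`)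
gives `‖B‖ ≤ C`.
Constant weights give (iii); the weights `sin (j π / (n + 1))`, the Perron eigenvector of the
path graph, give (iv).
-/

open scoped ENNReal

/-- The tridiagonal antisymmetric-type matrix with superdiagonal `b 0, …, b (n-2)`. -/
noncomputable def Bmat (n : ℕ) (b : ℕ → ℂ) : Matrix (Fin n) (Fin n) ℂ :=
  Matrix.of fun i j =>
    if (i : ℕ) + 1 = (j : ℕ) then b (i : ℕ)
    else if (j : ℕ) + 1 = (i : ℕ) then -(starRingEnd ℂ) (b (j : ℕ))
    else 0

open Finset Complex ComplexConjugate
open scoped InnerProductSpace Matrix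

section SkewAdjoint

variable {E : Type*} [NormedAddCommGroup E] [InnerProductSpace ℂ E]

theorem ContinuousLinearMap.norm_inner_self_le (T : E →L[ℂ] E) (x : E) :
    ‖⟪x, T x⟫_ℂ‖ ≤ ‖T‖ * ‖x‖ ^ 2 :=
  calc ‖⟪x, T x⟫_ℂ‖ ≤ ‖x‖ * ‖T x‖ := norm_inner_le_norm _ _
  _ ≤ ‖x‖ * (‖T‖ * ‖x‖) := by gcongr; exact T.le_opNorm x
  _ = ‖T‖ * ‖x‖ ^ 2 := by ring

theorem ContinuousLinearMap.norm_le_of_star_eq_neg [CompleteSpace E] {T : E →L[ℂ] E}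
    (hT : star T = -T) {C : ℝ} (hC : 0 ≤ C) (h : ∀ x, ‖⟪x, T x⟫_ℂ‖ ≤ C * ‖x‖ ^ 2) :
    ‖T‖ ≤ C := by
  -- `I • T` is self-adjoint, and a self-adjoint operator has norm `⨆ x, |rayleighQuotient x|`.
  have hS : IsSelfAdjoint (I • T) := by
    rw [IsSelfAdjoint, star_smul, hT, smul_neg, ← neg_smul]
    simp
  rw [← one_mul ‖T‖, ← norm_I, ← norm_smul, (I • T).norm_eq_iSup_rayleighQuotient hS.isSymmetric]
  refine ciSup_le fun x => ?_
  rw [rayleighQuotient, reApplyInnerSelf_apply, abs_div, abs_sq]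
  refine div_le_of_le_mul₀ (sq_nonneg _) hC ?_
  calc |re ⟪(I • T) x, x⟫_ℂ| ≤ ‖⟪(I • T) x, x⟫_ℂ‖ := abs_re_le_norm _
  _ = ‖⟪x, T x⟫_ℂ‖ := by simp [norm_inner_symm]
  _ ≤ C * ‖x‖ ^ 2 := h x

end SkewAdjoint

theorem opNorm_eq_norm_toEuclideanCLM {ι : Type*} [Fintype ι] [DecidableEq ι]
    (M : Matrix ι ι ℂ) : opNorm M = ‖Matrix.toEuclideanCLM (𝕜 := ℂ) M‖ := by
  unfold opNorm
  congr!

theorem sqrt_sum_norm_sq_le_opNorm {ι : Type*} [Fintype ι] [DecidableEq ι]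
    (M : Matrix ι ι ℂ) (j : ι) : √(∑ i, ‖M i j‖ ^ 2) ≤ opNorm M := by
  rw [opNorm_eq_norm_toEuclideanCLM]
  have := (Matrix.toEuclideanCLM (𝕜 := ℂ) M).le_opNorm (EuclideanSpace.single j 1)
  simpa [EuclideanSpace.norm_eq, EuclideanSpace.single, Matrix.mulVec_single_one] using this

theorem two_mul_mul_mul_le_weighted (a s t : ℝ) {p q : ℝ} (ha : 0 ≤ a) (hp : 0 < p)
    (hq : 0 < q) : 2 * a * s * t ≤ a * q / p * s ^ 2 + a * p / q * t ^ 2 := by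
  have h : a * q / p * s ^ 2 + a * p / q * t ^ 2 - 2 * a * s * t =
      a * (q * s - p * t) ^ 2 / (p * q) := by
    field_simp
    ring
  have : 0 ≤ a * (q * s - p * t) ^ 2 / (p * q) := by positivity
  linarith

-- `α m` and `β m` weight the two endpoints of the edge `{m, m + 1}` of a path on `K + 2` vertices.
theorem sum_range_edges_le (K : ℕ) (α β t : ℕ → ℝ) (C : ℝ) (ht : ∀ j, 0 ≤ t j)
    (h0 : α 0 ≤ C) (hK : β K ≤ C) (hmid : ∀ m < K, β m + α (m + 1) ≤ C) :
    ∑ m ∈ range (K + 1), (α m * t m + β m * t (m + 1)) ≤ C * ∑ j ∈ range (K + 2), t j := by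
  have hinner : ∑ m ∈ range K, (α (m + 1) * t (m + 1) + β m * t (m + 1)) ≤
      ∑ m ∈ range K, C * t (m + 1) :=
    sum_le_sum fun m hm => by nlinarith [hmid m (mem_range.mp hm), ht (m + 1)]
  rw [sum_add_distrib] at hinner
  rw [sum_add_distrib, sum_range_succ' (fun m => α m * t m),
    sum_range_succ (fun m => β m * t (m + 1)), sum_range_succ, sum_range_succ', mul_add, mul_add,
    mul_sum]
  nlinarith [ht 0, ht (K + 1)]

section Bmat

variable {n : ℕ}

noncomputable def superdiagonal (n : ℕ) (b : ℕ → ℂ) : Matrix (Fin n) (Fin n) ℂ :=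
  Matrix.of fun i j => if (i : ℕ) + 1 = (j : ℕ) then b i else 0

theorem Bmat_eq_superdiagonal_sub_conjTranspose (b : ℕ → ℂ) :
    Bmat n b = superdiagonal n b - (superdiagonal n b)ᴴ := by
  ext i j
  simp only [Bmat, superdiagonal, Matrix.sub_apply, Matrix.conjTranspose_apply, Matrix.of_apply]
  split_ifs <;> first | omega | simp

theorem star_toEuclideanCLM_Bmat (b : ℕ → ℂ) :
    star (Matrix.toEuclideanCLM (𝕜 := ℂ) (Bmat n b)) =
      -Matrix.toEuclideanCLM (𝕜 := ℂ) (Bmat n b) := by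
  rw [← map_star, ← map_neg, Bmat_eq_superdiagonal_sub_conjTranspose,
    ← Matrix.star_eq_conjTranspose, star_sub, star_star, neg_sub]

theorem sum_norm_sq_Bmat_col_succ (b : ℕ → ℂ) {k : ℕ} (hk : k + 2 < n) :
    ∑ i, ‖Bmat n b i ⟨k + 1, by omega⟩‖ ^ 2 = ‖b k‖ ^ 2 + ‖b (k + 1)‖ ^ 2 := by
  rw [sum_eq_add (⟨k, by omega⟩ : Fin n) ⟨k + 2, hk⟩ (by simp)]
  · simp [Bmat]
  · intro i _ hi
    simp only [ne_eq, Fin.ext_iff] at hi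
    simp only [Bmat, Matrix.of_apply]
    rw [if_neg (by omega), if_neg (by omega), norm_zero, sq, mul_zero]
  · simp
  · simp

theorem sqrt_add_sq_le_opNorm_Bmat (b : ℕ → ℂ) {k : ℕ} (hk : k + 2 < n) :
    √(‖b k‖ ^ 2 + ‖b (k + 1)‖ ^ 2) ≤ opNorm (Bmat n b) :=
  sum_norm_sq_Bmat_col_succ b hk ▸ sqrt_sum_norm_sq_le_opNorm _ _

noncomputable def extendByZero (x : EuclideanSpace ℂ (Fin n)) (k : ℕ) : ℂ :=
  if h : k < n then x ⟨k, h⟩ else 0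

@[simp] theorem extendByZero_coe (x : EuclideanSpace ℂ (Fin n)) (i : Fin n) :
    extendByZero x i = x i := by
  simp [extendByZero]

theorem extendByZero_of_le (x : EuclideanSpace ℂ (Fin n)) {k : ℕ} (hk : n ≤ k) :
    extendByZero x k = 0 := by
  simp [extendByZero, hk.not_gt]

theorem norm_sq_eq_sum_extendByZero (x : EuclideanSpace ℂ (Fin n)) :
    ‖x‖ ^ 2 = ∑ k ∈ range n, ‖extendByZero x k‖ ^ 2 := by
  rw [EuclideanSpace.norm_sq_eq, ← Fin.sum_univ_eq_sum_range]
  simp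

theorem toEuclideanCLM_superdiagonal_apply (b : ℕ → ℂ) (y : EuclideanSpace ℂ (Fin n))
    (i : Fin n) :
    Matrix.toEuclideanCLM (𝕜 := ℂ) (superdiagonal n b) y i = b i * extendByZero y (i + 1) := by
  change (superdiagonal n b *ᵥ y.ofLp) i = _
  simp only [Matrix.mulVec, dotProduct, superdiagonal, Matrix.of_apply, ite_mul, zero_mul]
  simp_rw [← extendByZero_coe y]
  rw [Fin.sum_univ_eq_sum_range (fun j => if (i : ℕ) + 1 = j then b i * extendByZero y j else 0),
    sum_ite_eq]
  split_ifs with h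
  · rfl
  · rw [extendByZero_of_le y (by simpa using h), mul_zero]

theorem inner_toEuclideanCLM_superdiagonal (b : ℕ → ℂ) (x y : EuclideanSpace ℂ (Fin n)) :
    ⟪x, Matrix.toEuclideanCLM (𝕜 := ℂ) (superdiagonal n b) y⟫_ℂ =
      ∑ m ∈ range (n - 1), b m * conj (extendByZero x m) * extendByZero y (m + 1) := by
  simp only [PiLp.inner_apply, RCLike.inner_apply, toEuclideanCLM_superdiagonal_apply]
  simp_rw [← extendByZero_coe x]
  rw [Fin.sum_univ_eq_sum_range (fun m => b m * extendByZero y (m + 1) * conj (extendByZero x m))]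
  cases n with
  | zero => simp
  | succ N =>
    rw [sum_range_succ, extendByZero_of_le y le_rfl, Nat.add_sub_cancel]
    simp only [mul_zero, zero_mul, add_zero]
    exact sum_congr rfl fun m _ => by ring

theorem inner_toEuclideanCLM_Bmat_self (b : ℕ → ℂ) (x : EuclideanSpace ℂ (Fin n)) :
    ⟪x, Matrix.toEuclideanCLM (𝕜 := ℂ) (Bmat n b) x⟫_ℂ =
      (∑ m ∈ range (n - 1), b m * conj (extendByZero x m) * extendByZero x (m + 1)) -
        conj (∑ m ∈ range (n - 1), b m * conj (extendByZero x m) * extendByZero x (m + 1)) := by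
  rw [Bmat_eq_superdiagonal_sub_conjTranspose, ← Matrix.star_eq_conjTranspose, map_sub, map_star,
    sub_apply, inner_sub_right, ContinuousLinearMap.star_eq_adjoint,
    ContinuousLinearMap.adjoint_inner_right,
    ← inner_conj_symm (Matrix.toEuclideanCLM (𝕜 := ℂ) (superdiagonal n b) x) x,
    inner_toEuclideanCLM_superdiagonal]

theorem norm_inner_toEuclideanCLM_Bmat_self_le (b : ℕ → ℂ) (x : EuclideanSpace ℂ (Fin n)) :
    ‖⟪x, Matrix.toEuclideanCLM (𝕜 := ℂ) (Bmat n b) x⟫_ℂ‖ ≤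
      ∑ m ∈ range (n - 1), 2 * ‖b m‖ * ‖extendByZero x m‖ * ‖extendByZero x (m + 1)‖ := by
  rw [inner_toEuclideanCLM_Bmat_self]
  refine (norm_sub_le _ _).trans ?_
  rw [RCLike.norm_conj, ← two_mul]
  refine (mul_le_mul_of_nonneg_left (norm_sum_le _ _) zero_le_two).trans_eq ?_
  simp only [mul_sum, norm_mul, RCLike.norm_conj, mul_assoc]

noncomputable def phaseVec (b : ℕ → ℂ) : ℕ → ℂ
  | 0 => 1
  | m + 1 => I * exp (-(arg (b m) : ℂ) * I) * phaseVec b m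

theorem norm_phaseVec (b : ℕ → ℂ) (m : ℕ) : ‖phaseVec b m‖ = 1 := by
  induction m with
  | zero => simp [phaseVec]
  | succ m ih => simp [phaseVec, ih, ← ofReal_neg, norm_exp_ofReal_mul_I]

theorem mul_conj_phaseVec_mul_phaseVec_succ (b : ℕ → ℂ) (m : ℕ) :
    b m * conj (phaseVec b m) * phaseVec b (m + 1) = I * ‖b m‖ := by
  have hb : b m * exp (-(arg (b m) : ℂ) * I) = ‖b m‖ := by
    nth_rewrite 1 [← norm_mul_exp_arg_mul_I (b m)]
    rw [mul_assoc, ← exp_add, neg_mul, add_neg_cancel, exp_zero, mul_one]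
  calc b m * conj (phaseVec b m) * phaseVec b (m + 1)
      = I * (b m * exp (-(arg (b m) : ℂ) * I)) * (conj (phaseVec b m) * phaseVec b m) := by
        rw [phaseVec]; ring
  _ = I * ‖b m‖ := by
        rw [hb, conj_mul', norm_phaseVec]; simp

theorem two_mul_sum_norm_le_mul_opNorm_Bmat (b : ℕ → ℂ) :
    2 * ∑ i ∈ range (n - 1), ‖b i‖ ≤ n * opNorm (Bmat n b) := by
  set u : EuclideanSpace ℂ (Fin n) := WithLp.toLp 2 fun i => phaseVec b i
  have hu : ∀ m < n, extendByZero u m = phaseVec b m := fun m hm => by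
    simp [extendByZero, hm, u]
  have hz : ∑ m ∈ range (n - 1), b m * conj (extendByZero u m) * extendByZero u (m + 1) =
      I * ∑ i ∈ range (n - 1), (‖b i‖ : ℂ) := by
    rw [mul_sum]
    refine sum_congr rfl fun m hm => ?_
    rw [mem_range] at hm
    rw [hu m (by omega), hu (m + 1) (by omega), mul_conj_phaseVec_mul_phaseVec_succ]
  have hinner : ⟪u, Matrix.toEuclideanCLM (𝕜 := ℂ) (Bmat n b) u⟫_ℂ =
      2 * I * ∑ i ∈ range (n - 1), (‖b i‖ : ℂ) := by
    rw [inner_toEuclideanCLM_Bmat_self, hz, map_mul, conj_I, map_sum]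
    simp only [conj_ofReal]
    ring
  have hnorm : ‖u‖ ^ 2 = n := by
    rw [norm_sq_eq_sum_extendByZero,
      sum_congr rfl fun m hm => by rw [hu m (mem_range.mp hm), norm_phaseVec]]
    simp
  have := (Matrix.toEuclideanCLM (𝕜 := ℂ) (Bmat n b)).norm_inner_self_le u
  rw [hinner, hnorm, ← opNorm_eq_norm_toEuclideanCLM, ← ofReal_sum, norm_mul, norm_mul,
    norm_I, norm_real, Real.norm_of_nonneg (sum_nonneg fun i _ => norm_nonneg _)] at this
  norm_num at this
  linarith

theorem opNorm_Bmat_le_of_weights {K : ℕ} (b : ℕ → ℂ) (w : ℕ → ℝ) (hw : ∀ j ≤ K + 1, 0 < w j)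
    {C : ℝ} (h0 : ‖b 0‖ * w 1 ≤ C * w 0) (hK : ‖b K‖ * w K ≤ C * w (K + 1))
    (hmid : ∀ m < K, ‖b m‖ * w m + ‖b (m + 1)‖ * w (m + 2) ≤ C * w (m + 1)) :
    opNorm (Bmat (K + 2) b) ≤ C := by
  have hw0 := hw 0 (by omega)
  have hC : 0 ≤ C := by nlinarith [norm_nonneg (b 0), hw 1 (by omega)]
  rw [opNorm_eq_norm_toEuclideanCLM]
  refine ContinuousLinearMap.norm_le_of_star_eq_neg (star_toEuclideanCLM_Bmat b) hC fun x => ?_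
  set s : ℕ → ℝ := fun m => ‖extendByZero x m‖
  calc ‖⟪x, Matrix.toEuclideanCLM (𝕜 := ℂ) (Bmat (K + 2) b) x⟫_ℂ‖
      ≤ ∑ m ∈ range (K + 1), 2 * ‖b m‖ * s m * s (m + 1) :=
        norm_inner_toEuclideanCLM_Bmat_self_le b x
  _ ≤ ∑ m ∈ range (K + 1), (‖b m‖ * w (m + 1) / w m * s m ^ 2 +
        ‖b m‖ * w m / w (m + 1) * s (m + 1) ^ 2) :=
        sum_le_sum fun m hm => by
          have := mem_range.mp hm
          exact two_mul_mul_mul_le_weighted _ _ _ (norm_nonneg _) (hw m (by omega))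
            (hw (m + 1) (by omega))
  _ ≤ C * ∑ j ∈ range (K + 2), s j ^ 2 := by
        refine sum_range_edges_le K _ _ _ C (fun j => sq_nonneg _) ?_ ?_ ?_
        · rwa [div_le_iff₀ hw0]
        · rwa [div_le_iff₀ (hw (K + 1) le_rfl)]
        · intro m hm
          rw [← add_div, div_le_iff₀ (hw (m + 1) (by omega))]
          exact hmid m hm
  _ = C * ‖x‖ ^ 2 := by rw [norm_sq_eq_sum_extendByZero]

theorem opNorm_Bmat_le_sup'_add (b : ℕ → ℂ) (hne : (range (n - 2)).Nonempty) :
    opNorm (Bmat n b) ≤ (range (n - 2)).sup' hne (fun i => ‖b i‖ + ‖b (i + 1)‖) := by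
  obtain ⟨k, rfl⟩ : ∃ k, n = k + 1 + 2 := ⟨n - 3, by simp at hne; omega⟩
  have hc : ∀ i ≤ k, ‖b i‖ + ‖b (i + 1)‖ ≤ (range (k + 1 + 2 - 2)).sup' hne _ :=
    fun i hi => le_sup' (fun i => ‖b i‖ + ‖b (i + 1)‖) (by simp; omega)
  refine opNorm_Bmat_le_of_weights b (fun _ => 1) (fun _ _ => one_pos) ?_ ?_ ?_
  · linarith [hc 0 (Nat.zero_le k), norm_nonneg (b 1)]
  · linarith [hc k le_rfl, norm_nonneg (b k)]
  · intro m hm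
    linarith [hc m (by omega)]

theorem opNorm_Bmat_le_two_mul_cos_mul_sup' (b : ℕ → ℂ) (hne : (range (n - 1)).Nonempty) :
    opNorm (Bmat n b) ≤
      2 * Real.cos (Real.pi / ((n : ℝ) + 1)) * (range (n - 1)).sup' hne (fun i => ‖b i‖) := by
  obtain ⟨K, rfl⟩ : ∃ K, n = K + 2 := ⟨n - 2, by simp at hne; omega⟩
  set θ := Real.pi / (((K + 2 : ℕ) : ℝ) + 1)
  set M := (range (K + 2 - 1)).sup' hne (fun i => ‖b i‖)
  set s : ℕ → ℝ := fun j => Real.sin (j * θ)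
  have hM : ∀ m ≤ K, ‖b m‖ ≤ M := fun m hm => le_sup' (fun i => ‖b i‖) (by simp; omega)
  have hs_pos : ∀ j : ℕ, 1 ≤ j → j ≤ K + 2 → 0 < s j := by
    intro j hj1 hj2
    have hj : (j : ℝ) / (K + 3) < 1 :=
      (div_lt_one (by positivity)).mpr (by exact_mod_cast hj2.trans_lt (by omega))
    apply Real.sin_pos_of_pos_of_lt_pi
    · have : (1 : ℝ) ≤ j := by exact_mod_cast hj1
      positivity
    · rw [show (j : ℝ) * θ = j / (K + 3) * Real.pi by simp [θ]; ring]
      exact mul_lt_of_lt_one_left Real.pi_pos hj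
  have hs_zero : s 0 = 0 := by simp [s]
  have hs_end : s (K + 3) = 0 := by
    simp only [s]
    rw [show ((K + 3 : ℕ) : ℝ) * θ = Real.pi by simp [θ]; field_simp; ring, Real.sin_pi]
  have hs_rec : ∀ j, s j + s (j + 2) = 2 * Real.cos θ * s (j + 1) := by
    intro j
    simp only [s]
    rw [show ((j : ℕ) : ℝ) * θ = ((j + 1 : ℕ) : ℝ) * θ - θ by push_cast; ring,
      show ((j + 2 : ℕ) : ℝ) * θ = ((j + 1 : ℕ) : ℝ) * θ + θ by push_cast; ring,
      Real.sin_sub, Real.sin_add]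
    ring
  clear_value s
  refine opNorm_Bmat_le_of_weights b (fun j => s (j + 1))
    (fun j hj => hs_pos (j + 1) (by omega) (by omega)) ?_ ?_ ?_
  · have := hs_rec 0
    simp only [zero_add, Nat.reduceAdd, hs_zero] at this ⊢
    linear_combination
      mul_le_mul_of_nonneg_right (hM 0 (Nat.zero_le K)) (hs_pos 2 (by omega) (by omega)).le +
      M * this
  · have := hs_rec (K + 1)
    simp only [add_assoc, Nat.reduceAdd, hs_end] at this ⊢
    linear_combination
      mul_le_mul_of_nonneg_right (hM K le_rfl) (hs_pos (K + 1) (by omega) (by omega)).le +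
      M * this
  · intro m hm
    have := hs_rec (m + 1)
    simp only [add_assoc, Nat.reduceAdd] at this ⊢
    linear_combination
      mul_le_mul_of_nonneg_right (hM m (by omega)) (hs_pos (m + 1) (by omega) (by omega)).le +
      mul_le_mul_of_nonneg_right (hM (m + 1) (by omega)) (hs_pos (m + 3) (by omega) (by omega)).le +
      M * this

end Bmat

theorem stmt17 {n : ℕ} (hn : 3 ≤ n) (b : ℕ → ℂ) :
    ((Finset.range (n - 2)).sup' (by simp; omega)
        (fun i => Real.sqrt (‖b i‖ ^ 2 + ‖b (i + 1)‖ ^ 2)) ≤ opNorm (Bmat n b)) ∧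
    ((2 / (n : ℝ)) * ∑ i ∈ Finset.range (n - 1), ‖b i‖ ≤ opNorm (Bmat n b)) ∧
    (opNorm (Bmat n b) ≤
      (Finset.range (n - 2)).sup' (by simp; omega) (fun i => ‖b i‖ + ‖b (i + 1)‖)) ∧
    (opNorm (Bmat n b) ≤
      2 * Real.cos (Real.pi / ((n : ℝ) + 1)) *
        (Finset.range (n - 1)).sup' (by simp; omega) (fun i => ‖b i‖)) := by
  refine ⟨sup'_le _ _ fun k hk => sqrt_add_sq_le_opNorm_Bmat b (by simp at hk; omega), ?_,
    opNorm_Bmat_le_sup'_add b _, opNorm_Bmat_le_two_mul_cos_mul_sup' b _⟩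
  rw [div_mul_eq_mul_div, div_le_iff₀ (Nat.cast_pos.mpr (by omega)), mul_comm _ (n : ℝ)]
  exact two_mul_sum_norm_le_mul_opNorm_Bmat b
end
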